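/- Let C be a clique cutset in a graph G with cut-partition (A, B, C), and let G_A = G[A ∪ C] and G_B = G[B ∪ C]. Then the tree-independence number of G equals max{tree-α(G_A), tree-α(G_B)}. -/

import Mathlib

open SimpleGraph

/-- `S` is an independent set in `G`. -/
def IsIndepOn {V : Type} (G : SimpleGraph V) (S : Set V) : Prop :=
  S.Pairwise fun u v => ¬ G.Adj u v

/-- The independence number of `G`. -/
noncomputable def indepNum {V : Type} (G : SimpleGraph V) : ℕ :=
  sSup {n | ∃ S : Set V, IsIndepOn G S ∧ S.ncard = n}

/-- The clique number of `G`. -/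
noncomputable def cliqueNumber {V : Type} (G : SimpleGraph V) : ℕ :=
  sSup {n | ∃ S : Set V, G.IsClique S ∧ S.ncard = n}

/-- A tree decomposition of a graph `G`. -/
structure TreeDecomp {V : Type} (G : SimpleGraph V) where
  ι : Type
  tree : SimpleGraph ι
  tree_isTree : tree.IsTree
  bag : ι → Set V
  mem_bag : ∀ v : V, ∃ t, v ∈ bag t
  edge_bag : ∀ ⦃u v : V⦄, G.Adj u v → ∃ t, u ∈ bag t ∧ v ∈ bag t
  bag_connected : ∀ v : V, (tree.induce {t | v ∈ bag t}).Connected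

/-- The independence number of a family of bags: the maximum independence number
of a subgraph of `G` induced by some bag. -/
noncomputable def bagAlpha {V : Type} (G : SimpleGraph V) {ι : Type} (bag : ι → Set V) : ℕ :=
  sSup {n | ∃ t, ∃ S : Set V, S ⊆ bag t ∧ IsIndepOn G S ∧ S.ncard = n}

/-- The independence number of a tree decomposition. -/
noncomputable def tdAlpha {V : Type} {G : SimpleGraph V} (td : TreeDecomp G) : ℕ :=
  bagAlpha G td.bag

/-- The width of a tree decomposition: maximum bag size minus one. -/
noncomputable def tdWidth {V : Type} {G : SimpleGraph V} (td : TreeDecomp G) : ℕ :=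
  sSup {n | ∃ t, (td.bag t).ncard = n} - 1

/-- The treewidth of `G`. -/
noncomputable def treewidth {V : Type} (G : SimpleGraph V) : ℕ :=
  sInf {w | ∃ td : TreeDecomp G, tdWidth td = w}

/-- The tree-independence number of `G`. -/
noncomputable def treeIndepNum {V : Type} (G : SimpleGraph V) : ℕ :=
  sInf {k | ∃ td : TreeDecomp G, tdAlpha td = k}

/-- A graph is chordal if it has no induced cycle of length at least four. -/
def Chordal {V : Type} (G : SimpleGraph V) : Prop :=
  ∀ n : ℕ, 4 ≤ n → IsEmpty (cycleGraph n ↪g G)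

/-!
Restricting a tree decomposition of `G` to `X` gives one of `G[X]` whose bags are subsets of the
old ones, so `tree-α` is monotone under induced subgraphs. Conversely, every finite clique lies in
a single bag of any tree decomposition, because the subtrees of the bags containing two adjacent
vertices meet and a tree has the Helly property. Hence optimal decompositions of `G[A ∪ C]` and
`G[B ∪ C]` each have a bag containing `C`; joining their trees by an edge between these two bags
yields a tree decomposition of `G` whose bags are exactly the bags of the two pieces.
-/

section BagAlpha

variable {V : Type} {ι : Type}

lemma bagAlpha_le {G : SimpleGraph V} {bag : ι → Set V} {m : ℕ}
    (h : ∀ t S, S ⊆ bag t → IsIndepOn G S → S.ncard ≤ m) : bagAlpha G bag ≤ m :=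
  csSup_le' <| by rintro _ ⟨t, S, hS, hind, rfl⟩; exact h t S hS hind

lemma ncard_le_bagAlpha [Finite V] {G : SimpleGraph V} {bag : ι → Set V} {t : ι} {S : Set V}
    (hS : S ⊆ bag t) (hind : IsIndepOn G S) : S.ncard ≤ bagAlpha G bag := by
  refine le_csSup ⟨Nat.card V, ?_⟩ ⟨t, S, hS, hind, rfl⟩
  rintro _ ⟨-, T, -, -, rfl⟩
  exact Set.ncard_le_card T

lemma isIndepOn_induce_iff {G : SimpleGraph V} {X : Set V} {S : Set X} :
    IsIndepOn (G.induce X) S ↔ IsIndepOn G (Subtype.val '' S) := by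
  simp [IsIndepOn, Set.Pairwise]

end BagAlpha

namespace SimpleGraph

variable {ι κ : Type}

lemma Walk.IsCycle.induce {T : SimpleGraph ι} {u : ι} {c : T.Walk u u} (hc : c.IsCycle)
    (S : Set ι) (hS : ∀ x ∈ c.support, x ∈ S) : (c.induce S hS).IsCycle :=
  (Walk.isCycle_map_iff_of_injective (Embedding.induce (G := T) S).injective).mp
    (by rwa [Walk.map_induce])

lemma isAcyclic_sum {T : SimpleGraph ι} {T' : SimpleGraph κ} (hT : T.IsAcyclic)
    (hT' : T'.IsAcyclic) : (T ⊕g T').IsAcyclic := by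
  classical
  rintro (v | w) c hc
  · refine Embedding.sumInl.isoInduceRange.isAcyclic_iff.mp hT (c.induce _ fun x hx => ?_)
      (hc.induce _ _)
    rcases x with u | u
    · exact ⟨u, rfl⟩
    · exact (not_reachable_sum_inl_inr v u ⟨c.takeUntil _ hx⟩).elim
  · refine Embedding.sumInr.isoInduceRange.isAcyclic_iff.mp hT' (c.induce _ fun x hx => ?_)
      (hc.induce _ _)
    rcases x with u | u
    · exact (not_reachable_sum_inl_inr u w ⟨(c.takeUntil _ hx).reverse⟩).elim
    · exact ⟨u, rfl⟩

lemma IsTree.sum_sup_edge {T : SimpleGraph ι} {T' : SimpleGraph κ} (hT : T.IsTree)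
    (hT' : T'.IsTree) (t : ι) (t' : κ) : ((T ⊕g T') ⊔ edge (Sum.inl t) (Sum.inr t')).IsTree :=
  ⟨hT.connected.sum_sup_edge hT'.connected,
    (isAcyclic_sum hT.isAcyclic hT'.isAcyclic).sup_edge_of_not_reachable
      (not_reachable_sum_inl_inr _ _)⟩

lemma Connected.induce_image {T : SimpleGraph ι} {T' : SimpleGraph κ} (φ : T →g T')
    {S : Set ι} (h : (T.induce S).Connected) : (T'.induce (φ '' S)).Connected :=
  h.map (induceHom φ (Set.mapsTo_image φ S)) (Set.surjective_mapsTo_image_restrict φ S)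

lemma reachable_deleteEdges_of_connected_induce {T : SimpleGraph ι} {S : Set ι}
    (hS : (T.induce S).Connected) {t t' a b : ι} (ht' : t' ∉ S) (ha : a ∈ S) (hb : b ∈ S) :
    (T.deleteEdges {s(t, t')}).Reachable a b := by
  let φ : T.induce S →g T.deleteEdges {s(t, t')} :=
    ⟨Subtype.val, fun {x y} h => by
      refine deleteEdges_adj.mpr ⟨h, ?_⟩
      rintro hxy
      rw [Set.mem_singleton_iff, Sym2.eq_iff] at hxy
      rcases hxy with ⟨-, hy⟩ | ⟨hx, -⟩
      exacts [ht' (hy ▸ y.2), ht' (hx ▸ x.2)]⟩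
  exact (hS.preconnected ⟨a, ha⟩ ⟨b, hb⟩).map φ

end SimpleGraph

namespace TreeDecomp

variable {V : Type} {G : SimpleGraph V}

def single (G : SimpleGraph V) : TreeDecomp G where
  ι := Unit
  tree := ⊥
  tree_isTree := .of_subsingleton
  bag _ := Set.univ
  mem_bag _ := ⟨(), trivial⟩
  edge_bag _ _ _ := ⟨(), trivial, trivial⟩
  bag_connected _ := @Connected.of_subsingleton _ _ ⟨⟨(), trivial⟩⟩ _

lemma exists_tdAlpha_eq_treeIndepNum (G : SimpleGraph V) :
    ∃ td : TreeDecomp G, tdAlpha td = treeIndepNum G :=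
  Nat.sInf_mem (s := {k | ∃ td : TreeDecomp G, tdAlpha td = k}) ⟨_, single G, rfl⟩

def restrict (td : TreeDecomp G) (X : Set V) : TreeDecomp (G.induce X) where
  ι := td.ι
  tree := td.tree
  tree_isTree := td.tree_isTree
  bag t := Subtype.val ⁻¹' td.bag t
  mem_bag v := td.mem_bag v
  edge_bag _ _ h := td.edge_bag h
  bag_connected v := td.bag_connected v

lemma tdAlpha_restrict_le [Finite V] (td : TreeDecomp G) (X : Set V) :
    tdAlpha (td.restrict X) ≤ tdAlpha td :=
  bagAlpha_le fun t S hS hind => by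
    rw [← Set.ncard_image_of_injective S Subtype.val_injective]
    exact ncard_le_bagAlpha (Set.image_subset_iff.mpr hS) (isIndepOn_induce_iff.mp hind)

end TreeDecomp

lemma treeIndepNum_induce_le {V : Type} [Finite V] (G : SimpleGraph V) (X : Set V) :
    treeIndepNum (G.induce X) ≤ treeIndepNum G := by
  obtain ⟨td, htd⟩ := TreeDecomp.exists_tdAlpha_eq_treeIndepNum G
  calc treeIndepNum (G.induce X) ≤ tdAlpha (td.restrict X) := Nat.sInf_le ⟨_, rfl⟩
    _ ≤ tdAlpha td := td.tdAlpha_restrict_le X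
    _ = treeIndepNum G := htd

namespace TreeDecomp

variable {V : Type} {G : SimpleGraph V} {X Y : Set V}

lemma exists_insert_subset_bag (td : TreeDecomp G) {K : Set V} {v : V}
    (hadj : ∀ u ∈ K, u ≠ v → G.Adj u v) {t r : td.ι} (p : td.tree.Walk t r) (hp : p.IsPath)
    (hK : K ⊆ td.bag t) (hv : v ∈ td.bag r) : ∃ t', insert v K ⊆ td.bag t' := by
  induction p with
  | nil => exact ⟨_, Set.insert_subset hv hK⟩
  | @cons t t₁ r htt₁ p ih =>
    by_cases hvt : v ∈ td.bag t
    · exact ⟨t, Set.insert_subset hvt hK⟩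
    refine ih hp.of_cons (fun u hu => ?_) hv
    -- If `u ∉ bag t₁`, the subtrees of `u` and `v` together with `p` would join `t` to `t₁`
    -- without using the bridge `s(t, t₁)`.
    by_contra hut₁
    obtain ⟨s, hus, hvs⟩ := td.edge_bag (hadj u hu fun huv => hvt (huv ▸ hK hu))
    have hbridge : td.tree.IsBridge s(t, t₁) :=
      isAcyclic_iff_forall_adj_isBridge.mp td.tree_isTree.isAcyclic htt₁
    have hts : (td.tree.deleteEdges {s(t, t₁)}).Reachable t s :=
      reachable_deleteEdges_of_connected_induce (td.bag_connected u) hut₁ (hK hu) hus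
    have hsr : (td.tree.deleteEdges {s(t, t₁)}).Reachable s r := by
      rw [Sym2.eq_swap]
      exact reachable_deleteEdges_of_connected_induce (td.bag_connected v) hvt hvs hv
    have ht₁r : (td.tree.deleteEdges {s(t, t₁)}).Reachable t₁ r :=
      reachable_deleteEdges_iff_exists_walk.mpr
        ⟨p, fun h => (Walk.cons_isPath_iff _ _).mp hp |>.2 (p.fst_mem_support_of_mem_edges h)⟩
    exact isBridge_iff.mp hbridge ((hts.trans hsr).trans ht₁r.symm)

lemma exists_subset_bag_of_isClique (td : TreeDecomp G) {K : Set V} (hfin : K.Finite)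
    (hK : G.IsClique K) : ∃ t, K ⊆ td.bag t := by
  classical
  induction K, hfin using Set.Finite.induction_on with
  | empty => exact ⟨td.tree_isTree.connected.nonempty.some, Set.empty_subset _⟩
  | @insert v K _ _ ih =>
    obtain ⟨t, ht⟩ := ih (hK.subset (Set.subset_insert v K))
    obtain ⟨r, hr⟩ := td.mem_bag v
    obtain ⟨p⟩ := td.tree_isTree.connected.preconnected t r
    exact td.exists_insert_subset_bag
      (fun u hu huv => hK (Set.mem_insert_of_mem v hu) (Set.mem_insert v K) huv)
      p.bypass p.bypass_isPath ht hr

def imageBag (td : TreeDecomp (G.induce X)) (t : td.ι) : Set V :=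
  Subtype.val '' td.bag t

lemma mem_imageBag {td : TreeDecomp (G.induce X)} {t : td.ι} {v : V} :
    v ∈ td.imageBag t ↔ ∃ hv : v ∈ X, ⟨v, hv⟩ ∈ td.bag t := by
  simp [imageBag]

lemma exists_subset_imageBag_of_isClique (td : TreeDecomp (G.induce X)) {K : Set V}
    (hfin : K.Finite) (hK : G.IsClique K) (hKX : K ⊆ X) :
    ∃ t, K ⊆ td.imageBag t := by
  obtain ⟨t, ht⟩ := td.exists_subset_bag_of_isClique (hfin.preimage Subtype.val_injective.injOn)
    (isClique_induce_iff.mpr (hK.subset (Set.image_preimage_subset _ _)))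
  exact ⟨t, fun v hv => ⟨⟨v, hKX hv⟩, ht hv, rfl⟩⟩

lemma connected_induce_setOf_mem_imageBag (td : TreeDecomp (G.induce X)) {v : V}
    (hv : v ∈ X) :
    (td.tree.induce {t | v ∈ td.imageBag t}).Connected := by
  have h : {t | v ∈ td.imageBag t} = {t | ⟨v, hv⟩ ∈ td.bag t} := by
    ext t
    simp [mem_imageBag, hv]
  exact h ▸ td.bag_connected ⟨v, hv⟩

lemma setOf_mem_imageBag_eq_empty (td : TreeDecomp (G.induce X)) {v : V} (hv : v ∉ X) :
    {t | v ∈ td.imageBag t} = ∅ := by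
  simp [mem_imageBag, hv]

lemma ncard_le_tdAlpha_of_subset_imageBag [Finite V] (td : TreeDecomp (G.induce X))
    {t : td.ι} {S : Set V} (hS : S ⊆ td.imageBag t) (hind : IsIndepOn G S) :
    S.ncard ≤ tdAlpha td := by
  have hS' : Subtype.val '' (Subtype.val ⁻¹' S : Set X) = S :=
    Set.image_preimage_eq_of_subset (hS.trans (Set.image_subset_range _ _))
  rw [← hS', Set.ncard_image_of_injective _ Subtype.val_injective]
  refine ncard_le_bagAlpha (t := t) (fun x hx => ?_)
    (isIndepOn_induce_iff.mpr (hS'.symm ▸ hind))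
  exact Subtype.val_injective.mem_set_image.mp (hS hx)

def glue (tdX : TreeDecomp (G.induce X)) (tdY : TreeDecomp (G.induce Y))
    (hcover : X ∪ Y = Set.univ)
    (hsep : ∀ ⦃u v⦄, G.Adj u v → u ∈ X ∧ v ∈ X ∨ u ∈ Y ∧ v ∈ Y) (x₀ : tdX.ι) (y₀ : tdY.ι)
    (hx₀ : X ∩ Y ⊆ tdX.imageBag x₀) (hy₀ : X ∩ Y ⊆ tdY.imageBag y₀) :
    TreeDecomp G where
  ι := tdX.ι ⊕ tdY.ι
  tree := (tdX.tree ⊕g tdY.tree) ⊔ edge (Sum.inl x₀) (Sum.inr y₀)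
  tree_isTree := tdX.tree_isTree.sum_sup_edge tdY.tree_isTree x₀ y₀
  bag := Sum.elim tdX.imageBag tdY.imageBag
  mem_bag v := by
    rcases (Set.eq_univ_iff_forall.mp hcover v) with hv | hv
    · obtain ⟨t, ht⟩ := tdX.mem_bag ⟨v, hv⟩
      exact ⟨Sum.inl t, ⟨v, hv⟩, ht, rfl⟩
    · obtain ⟨t, ht⟩ := tdY.mem_bag ⟨v, hv⟩
      exact ⟨Sum.inr t, ⟨v, hv⟩, ht, rfl⟩
  edge_bag u v h := by
    rcases hsep h with ⟨hu, hv⟩ | ⟨hu, hv⟩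
    · obtain ⟨t, hut, hvt⟩ := tdX.edge_bag (u := ⟨u, hu⟩) (v := ⟨v, hv⟩) h
      exact ⟨Sum.inl t, ⟨_, hut, rfl⟩, ⟨_, hvt, rfl⟩⟩
    · obtain ⟨t, hut, hvt⟩ := tdY.edge_bag (u := ⟨u, hu⟩) (v := ⟨v, hv⟩) h
      exact ⟨Sum.inr t, ⟨_, hut, rfl⟩, ⟨_, hvt, rfl⟩⟩
  bag_connected v := by
    let φX : tdX.tree →g (tdX.tree ⊕g tdY.tree) ⊔ edge (Sum.inl x₀) (Sum.inr y₀) :=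
      (Hom.ofLE le_sup_left).comp Embedding.sumInl.toHom
    let φY : tdY.tree →g (tdX.tree ⊕g tdY.tree) ⊔ edge (Sum.inl x₀) (Sum.inr y₀) :=
      (Hom.ofLE le_sup_left).comp Embedding.sumInr.toHom
    have hS : {s | v ∈ Sum.elim tdX.imageBag tdY.imageBag s} =
        φX '' {t | v ∈ tdX.imageBag t} ∪ φY '' {t | v ∈ tdY.imageBag t} := by
      ext (t | t) <;> simp [φX, φY]
    rw [hS]
    by_cases hX : v ∈ X <;> by_cases hY : v ∈ Y
    · exact connected_induce_union
        ((tdX.connected_induce_setOf_mem_imageBag hX).induce_image φX).preconnected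
        ((tdY.connected_induce_setOf_mem_imageBag hY).induce_image φY).preconnected
        (Set.mem_image_of_mem φX (hx₀ ⟨hX, hY⟩)) (Set.mem_image_of_mem φY (hy₀ ⟨hX, hY⟩))
        (by simp [φX, φY, edge_adj])
    · rw [tdY.setOf_mem_imageBag_eq_empty hY, Set.image_empty, Set.union_empty]
      exact (tdX.connected_induce_setOf_mem_imageBag hX).induce_image φX
    · rw [tdX.setOf_mem_imageBag_eq_empty hX, Set.image_empty, Set.empty_union]
      exact (tdY.connected_induce_setOf_mem_imageBag hY).induce_image φY
    · exact absurd (Set.eq_univ_iff_forall.mp hcover v) (by simp [hX, hY])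

lemma tdAlpha_glue_le [Finite V] (tdX : TreeDecomp (G.induce X))
    (tdY : TreeDecomp (G.induce Y))
    (hcover : X ∪ Y = Set.univ)
    (hsep : ∀ ⦃u v⦄, G.Adj u v → u ∈ X ∧ v ∈ X ∨ u ∈ Y ∧ v ∈ Y) (x₀ : tdX.ι) (y₀ : tdY.ι)
    (hx₀ : X ∩ Y ⊆ tdX.imageBag x₀) (hy₀ : X ∩ Y ⊆ tdY.imageBag y₀) :
    tdAlpha (glue tdX tdY hcover hsep x₀ y₀ hx₀ hy₀) ≤ max (tdAlpha tdX) (tdAlpha tdY) :=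
  bagAlpha_le fun
    | .inl _, _, hS, hind => le_max_of_le_left (tdX.ncard_le_tdAlpha_of_subset_imageBag hS hind)
    | .inr _, _, hS, hind => le_max_of_le_right (tdY.ncard_le_tdAlpha_of_subset_imageBag hS hind)

end TreeDecomp

theorem stmt13_general {V : Type} [Fintype V] (G : SimpleGraph V) (A B C : Set V)
    (hcover : A ∪ B ∪ C = Set.univ)
    (hAB : Disjoint A B)
    (hnoedge : ∀ a ∈ A, ∀ b ∈ B, ¬ G.Adj a b)
    (hclique : G.IsClique C) :
    treeIndepNum G =
      max (treeIndepNum (G.induce (A ∪ C))) (treeIndepNum (G.induce (B ∪ C))) := by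
  have hcover' : (A ∪ C) ∪ (B ∪ C) = Set.univ := by
    rwa [← Set.union_union_distrib_right]
  have hsep : ∀ ⦃u v⦄, G.Adj u v → u ∈ A ∪ C ∧ v ∈ A ∪ C ∨ u ∈ B ∪ C ∧ v ∈ B ∪ C := by
    intro u v h
    have hu := hcover ▸ Set.mem_univ u
    have hv := hcover ▸ Set.mem_univ v
    simp only [Set.mem_union] at hu hv ⊢
    grind [hnoedge u, hnoedge v, h.symm]
  have hinter : (A ∪ C) ∩ (B ∪ C) ⊆ C := by
    rw [← Set.inter_union_distrib_right, hAB.inter_eq, Set.empty_union]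
  refine le_antisymm ?_ (max_le (treeIndepNum_induce_le G _) (treeIndepNum_induce_le G _))
  obtain ⟨tdA, hA⟩ := TreeDecomp.exists_tdAlpha_eq_treeIndepNum (G.induce (A ∪ C))
  obtain ⟨tdB, hB⟩ := TreeDecomp.exists_tdAlpha_eq_treeIndepNum (G.induce (B ∪ C))
  obtain ⟨a₀, ha₀⟩ := tdA.exists_subset_imageBag_of_isClique C.toFinite hclique
    Set.subset_union_right
  obtain ⟨b₀, hb₀⟩ := tdB.exists_subset_imageBag_of_isClique C.toFinite hclique
    Set.subset_union_right
  calc treeIndepNum G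
      ≤ tdAlpha (tdA.glue tdB hcover' hsep a₀ b₀ (hinter.trans ha₀) (hinter.trans hb₀)) :=
        Nat.sInf_le ⟨_, rfl⟩
    _ ≤ max (tdAlpha tdA) (tdAlpha tdB) := TreeDecomp.tdAlpha_glue_le ..
    _ = _ := by rw [hA, hB]

theorem stmt13 {V : Type} [Fintype V] (G : SimpleGraph V) (A B C : Set V)
    (hA : A.Nonempty) (hB : B.Nonempty)
    (hcover : A ∪ B ∪ C = Set.univ)
    (hAB : Disjoint A B) (hAC : Disjoint A C) (hBC : Disjoint B C)
    (hnoedge : ∀ a ∈ A, ∀ b ∈ B, ¬ G.Adj a b)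
    (hclique : G.IsClique C) :
    treeIndepNum G =
      max (treeIndepNum (G.induce (A ∪ C))) (treeIndepNum (G.induce (B ∪ C))) :=
  stmt13_general G A B C hcover hAB hnoedge hclique
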